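/- arXiv:2008.05507 — 7 statements merged into one kernel-verified Lean document; each statement's English description precedes it below -/
import Mathlib

section
/- Let (Ω, ℱ, P) be a probability space carrying real-valued random variables α, U₁, U₂ such that, almost surely, the conditional distributions of U₁ and U₂ given α coincide and have conditional CDF u ↦ F(u, α) that is strictly increasing in u for almost every value of α (i.e., P(Uₜ ≤ u ∣ α) = F(u, α) a.s. for t = 1, 2). Fix c₁, c₂ ∈ ℝ with c₂ > c₁ and define the binary random variables Dₜ = 1{Uₜ ≤ α + cₜ} for t = 1, 2. Then P(D₁ + D₂ = 1) > 0, and P(D₂ − D₁ = 1 ∣ D₁ + D₂ = 1) > 1/2; that is, the conditional median of D₂ − D₁ given the switching event {D₁ + D₂ = 1} equals sgn(c₂ − c₁) = 1. -/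
open MeasureTheory ProbabilityTheory
open scoped ENNReal

lemma aux_int {Ω : Type*} [MeasurableSpace Ω] (P : Measure Ω) [IsProbabilityMeasure P]
    {α : Ω → ℝ} (hα : Measurable α)
    (G : ℝ → Ω → ℝ)
    (hGmeas : ∀ u, StronglyMeasurable[MeasurableSpace.comap α inferInstance] (G u))
    (hGbdd : ∀ u, ∀ᵐ ω ∂P, |G u ω| ≤ 1)
    {k : Ω → ℤ} (hk : Measurable[MeasurableSpace.comap α inferInstance] k) (v : ℤ → ℝ) :
    Integrable (fun ω => G (v (k ω)) ω) P := by
  have hm := hα.comap_le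
  have hk0 : Measurable k := hk.mono hm le_rfl
  have hΦ : Measurable fun p : Ω × ℤ => G (v p.2) p.1 :=
    measurable_from_prod_countable_left fun j => ((hGmeas (v j)).measurable).mono hm le_rfl
  have hH : Measurable fun ω => G (v (k ω)) ω := hΦ.comp (measurable_id.prodMk hk0)
  refine Integrable.mono' (integrable_const (1:ℝ)) hH.aestronglyMeasurable ?_
  filter_upwards [ae_all_iff.mpr fun j : ℤ => hGbdd (v j)] with ω hω
  simpa [Real.norm_eq_abs] using hω (k ω)

lemma aux_freeze {Ω : Type*} [MeasurableSpace Ω] (P : Measure Ω) [IsProbabilityMeasure P]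
    {α : Ω → ℝ} (hα : Measurable α)
    {U : Ω → ℝ} (hU : Measurable U)
    (G : ℝ → Ω → ℝ)
    (hGmeas : ∀ u, StronglyMeasurable[MeasurableSpace.comap α inferInstance] (G u))
    (hGbdd : ∀ u, ∀ᵐ ω ∂P, |G u ω| ≤ 1)
    (hGset : ∀ u : ℝ, ∀ s : Set Ω, MeasurableSet[MeasurableSpace.comap α inferInstance] s →
      ∫ ω in s, G u ω ∂P = ∫ ω in s, Set.indicator {ω' | U ω' ≤ u} (fun _ => (1:ℝ)) ω ∂P)
    {k : Ω → ℤ} (hk : Measurable[MeasurableSpace.comap α inferInstance] k) (v : ℤ → ℝ) :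
    ∫ ω, Set.indicator {ω' | U ω' ≤ v (k ω')} (fun _ => (1:ℝ)) ω ∂P
      = ∫ ω, G (v (k ω)) ω ∂P := by
  have hm := hα.comap_le
  have hk0 : Measurable k := hk.mono hm le_rfl
  have hvk : Measurable fun ω => v (k ω) := (measurable_from_top (f := v)).comp hk0
  have hS : MeasurableSet {ω' | U ω' ≤ v (k ω')} := measurableSet_le hU hvk
  have hf_int : Integrable (fun ω => Set.indicator {ω' | U ω' ≤ v (k ω')} (fun _ => (1:ℝ)) ω) P :=
    (integrable_const (1:ℝ)).indicator hS
  have hH_int : Integrable (fun ω => G (v (k ω)) ω) P := aux_int P hα G hGmeas hGbdd hk v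
  set B : ℤ → Set Ω := fun j => k ⁻¹' {j} with hB_def
  have hBm : ∀ j, MeasurableSet[MeasurableSpace.comap α inferInstance] (B j) :=
    fun j => hk (measurableSet_singleton j)
  have hB0 : ∀ j, MeasurableSet (B j) := fun j => hm _ (hBm j)
  have hUn : (⋃ j, B j) = Set.univ := by
    ext ω; simp [hB_def]
  have hdisj : Pairwise (Function.onFun Disjoint B) := by
    intro i j hij
    rw [Function.onFun, Set.disjoint_left]
    intro ω hi hj
    exact hij ((Set.mem_preimage.mp hi).symm.trans (Set.mem_preimage.mp hj))
  have expand : ∀ f : Ω → ℝ, Integrable f P → ∫ ω, f ω ∂P = ∑' j : ℤ, ∫ ω in B j, f ω ∂P := by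
    intro f hf
    rw [← setIntegral_univ (f := f) (μ := P), ← hUn,
      integral_iUnion hB0 hdisj (hUn ▸ hf.integrableOn)]
  rw [expand _ hf_int, expand _ hH_int]
  refine tsum_congr fun j => ?_
  have h1 : ∫ ω in B j, Set.indicator {ω' | U ω' ≤ v (k ω')} (fun _ => (1:ℝ)) ω ∂P
      = ∫ ω in B j, Set.indicator {ω' | U ω' ≤ v j} (fun _ => (1:ℝ)) ω ∂P := by
    refine setIntegral_congr_fun (hB0 j) fun ω hω => ?_
    have hkj : k ω = j := hω
    simp only [Set.indicator_apply, Set.mem_setOf_eq, hkj]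
  have h2 : ∫ ω in B j, G (v j) ω ∂P = ∫ ω in B j, G (v (k ω)) ω ∂P := by
    refine setIntegral_congr_fun (hB0 j) fun ω hω => ?_
    have hkj : k ω = j := hω
    rw [hkj]
  rw [h1, ← hGset (v j) (B j) (hBm j), h2]

/-- Lemma 3.1 of the paper (median-sign representation, conditionally on the
covariates).  `Dₜ = 1{Uₜ ≤ α + cₜ}` are the binarized outcomes; under
stationarity (both errors have the same conditional CDF `F(·, α)` given the
fixed effect `α`) and full support (strict monotonicity of `F(·, α)`), if
`c₂ > c₁` then the switching event has positive probability and the conditional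
median of `D₂ − D₁` given switching is `sgn(c₂ − c₁) = 1`. -/
theorem stmt_4 {Ω : Type*} [MeasurableSpace Ω] (P : Measure Ω) [IsProbabilityMeasure P]
    (α U₁ U₂ : Ω → ℝ) (hα : Measurable α) (hU₁ : Measurable U₁) (hU₂ : Measurable U₂)
    (F : ℝ → ℝ → ℝ)
    (hFmono : ∀ᵐ ω ∂P, StrictMono fun u => F u (α ω))
    (hcond₁ : ∀ u : ℝ,
      P[Set.indicator {ω | U₁ ω ≤ u} (fun _ => (1 : ℝ)) |
        MeasurableSpace.comap α inferInstance] =ᵐ[P] fun ω => F u (α ω))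
    (hcond₂ : ∀ u : ℝ,
      P[Set.indicator {ω | U₂ ω ≤ u} (fun _ => (1 : ℝ)) |
        MeasurableSpace.comap α inferInstance] =ᵐ[P] fun ω => F u (α ω))
    (c₁ c₂ : ℝ) (hc : c₂ > c₁)
    (D₁ D₂ : Ω → ℤ)
    (hD₁ : D₁ = fun ω => if U₁ ω ≤ α ω + c₁ then 1 else 0)
    (hD₂ : D₂ = fun ω => if U₂ ω ≤ α ω + c₂ then 1 else 0) :
    0 < P {ω | D₁ ω + D₂ ω = 1} ∧
      1 / 2 < ProbabilityTheory.cond P {ω | D₁ ω + D₂ ω = 1} {ω | D₂ ω - D₁ ω = 1} := by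
  classical
  have hm := hα.comap_le
  -- the common conditional CDF as a conditional expectation
  set G : ℝ → Ω → ℝ :=
    fun u => P[Set.indicator {ω | U₁ ω ≤ u} (fun _ => (1 : ℝ)) |
      MeasurableSpace.comap α inferInstance] with hG_def
  have hint : ∀ (V : Ω → ℝ), Measurable V → ∀ u : ℝ,
      Integrable (Set.indicator {ω | V ω ≤ u} (fun _ => (1:ℝ))) P :=
    fun V hV u => (integrable_const (1:ℝ)).indicator (measurableSet_le hV measurable_const)
  have hGmeas : ∀ u, StronglyMeasurable[MeasurableSpace.comap α inferInstance] (G u) :=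
    fun u => stronglyMeasurable_condExp
  have hGbdd : ∀ u, ∀ᵐ ω ∂P, |G u ω| ≤ 1 := by
    intro u
    have h0 : 0 ≤ᵐ[P] G u :=
      condExp_nonneg (Filter.Eventually.of_forall fun ω =>
        Set.indicator_nonneg (fun _ _ => zero_le_one) ω)
    have h1 : G u ≤ᵐ[P] P[(fun _ : Ω => (1:ℝ)) | MeasurableSpace.comap α inferInstance] :=
      condExp_mono (hint U₁ hU₁ u) (integrable_const (1:ℝ))
        (Filter.Eventually.of_forall fun ω =>
          Set.indicator_le_self' (fun _ _ => zero_le_one) ω)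
    rw [condExp_const hm] at h1
    filter_upwards [h0, h1] with ω h0 h1
    simp only [Pi.zero_apply] at h0
    rw [abs_le]; exact ⟨by linarith, h1⟩
  have hGset₁ : ∀ u : ℝ, ∀ s : Set Ω, MeasurableSet[MeasurableSpace.comap α inferInstance] s →
      ∫ ω in s, G u ω ∂P = ∫ ω in s, Set.indicator {ω' | U₁ ω' ≤ u} (fun _ => (1:ℝ)) ω ∂P :=
    fun u s hs => setIntegral_condExp hm (hint U₁ hU₁ u) hs
  have hGae₂ : ∀ u : ℝ, P[Set.indicator {ω | U₂ ω ≤ u} (fun _ => (1:ℝ)) |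
      MeasurableSpace.comap α inferInstance] =ᵐ[P] G u :=
    fun u => (hcond₂ u).trans (hcond₁ u).symm
  have hGset₂ : ∀ u : ℝ, ∀ s : Set Ω, MeasurableSet[MeasurableSpace.comap α inferInstance] s →
      ∫ ω in s, G u ω ∂P = ∫ ω in s, Set.indicator {ω' | U₂ ω' ≤ u} (fun _ => (1:ℝ)) ω ∂P := by
    intro u s hs
    rw [← setIntegral_condExp hm (hint U₂ hU₂ u) hs]
    exact setIntegral_congr_ae (hm s hs) ((hGae₂ u).mono fun ω h _ => h.symm)
  -- dyadic mesh
  obtain ⟨N, hN⟩ := pow_unbounded_of_one_lt (R := ℝ) (2 / (c₂ - c₁)) one_lt_two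
  set t : ℝ := (2:ℝ)^N with ht_def
  have hts : (0:ℝ) < t := by positivity
  have hcc : (0:ℝ) < c₂ - c₁ := by linarith
  have htN : 2 < (c₂ - c₁) * t := by
    have h2 := (div_lt_iff₀ hcc).mp hN
    nlinarith
  set k₁ : Ω → ℤ := fun ω => ⌊(α ω + c₁) * t⌋ with hk₁_def
  set k₂ : Ω → ℤ := fun ω => ⌊(α ω + c₂) * t⌋ with hk₂_def
  set v₁ : ℤ → ℝ := fun j => ((j:ℝ) + 1) / t with hv₁_def
  set v₂ : ℤ → ℝ := fun j => (j:ℝ) / t with hv₂_def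
  have hcomp : ∀ (g : ℝ → ℤ), Measurable g →
      Measurable[MeasurableSpace.comap α inferInstance] (fun ω => g (α ω)) := by
    intro g hg
    apply Measurable.of_comap_le
    rw [show (fun ω => g (α ω)) = g ∘ α from rfl, ← MeasurableSpace.comap_comp]
    exact MeasurableSpace.comap_mono hg.comap_le
  have hk₁m : Measurable[MeasurableSpace.comap α inferInstance] k₁ :=
    hcomp (fun x => ⌊(x + c₁) * t⌋) ((measurable_id.add_const c₁).mul_const t).floor
  have hk₂m : Measurable[MeasurableSpace.comap α inferInstance] k₂ :=
    hcomp (fun x => ⌊(x + c₂) * t⌋) ((measurable_id.add_const c₂).mul_const t).floor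
  have hub₁ : ∀ ω, α ω + c₁ < v₁ (k₁ ω) := by
    intro ω
    rw [hv₁_def, lt_div_iff₀ hts]
    exact_mod_cast Int.lt_floor_add_one ((α ω + c₁) * t)
  have hlb₂ : ∀ ω, v₂ (k₂ ω) ≤ α ω + c₂ := by
    intro ω
    rw [hv₂_def, div_le_iff₀ hts]
    exact_mod_cast Int.floor_le ((α ω + c₂) * t)
  have hlt : ∀ ω, v₁ (k₁ ω) < v₂ (k₂ ω) := by
    intro ω
    have h1 : ((k₁ ω : ℝ) + 1) ≤ (α ω + c₁) * t + 1 := by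
      have := Int.floor_le ((α ω + c₁) * t); rw [hk₁_def]; push_cast; linarith
    have h2 : (α ω + c₂) * t - 1 < (k₂ ω : ℝ) := by
      have := Int.lt_floor_add_one ((α ω + c₂) * t); rw [hk₂_def]; push_cast; linarith
    rw [hv₁_def, hv₂_def, div_lt_div_iff₀ hts hts]
    nlinarith
  -- freezing
  have hfr₁ := aux_freeze P hα hU₁ G hGmeas hGbdd hGset₁ hk₁m v₁
  have hfr₂ := aux_freeze P hα hU₂ G hGmeas hGbdd hGset₂ hk₂m v₂
  have hintH₁ := aux_int P hα G hGmeas hGbdd hk₁m v₁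
  have hintH₂ := aux_int P hα G hGmeas hGbdd hk₂m v₂
  -- monotone comparisons with the true events
  have hvk₁ : Measurable fun ω => v₁ (k₁ ω) :=
    (measurable_from_top (f := v₁)).comp ((hk₁m.mono hm le_rfl))
  have hvk₂ : Measurable fun ω => v₂ (k₂ ω) :=
    (measurable_from_top (f := v₂)).comp ((hk₂m.mono hm le_rfl))
  have hE₁m : MeasurableSet {ω | U₁ ω ≤ α ω + c₁} :=
    measurableSet_le hU₁ (hα.add_const c₁)
  have hE₂m : MeasurableSet {ω | U₂ ω ≤ α ω + c₂} :=
    measurableSet_le hU₂ (hα.add_const c₂)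
  have hintE₁ : Integrable (Set.indicator {ω | U₁ ω ≤ α ω + c₁} (fun _ => (1:ℝ))) P :=
    (integrable_const (1:ℝ)).indicator hE₁m
  have hintE₂ : Integrable (Set.indicator {ω | U₂ ω ≤ α ω + c₂} (fun _ => (1:ℝ))) P :=
    (integrable_const (1:ℝ)).indicator hE₂m
  have hintS₁ : Integrable (fun ω => Set.indicator {ω' | U₁ ω' ≤ v₁ (k₁ ω')} (fun _ => (1:ℝ)) ω) P :=
    (integrable_const (1:ℝ)).indicator (measurableSet_le hU₁ hvk₁)
  have hintS₂ : Integrable (fun ω => Set.indicator {ω' | U₂ ω' ≤ v₂ (k₂ ω')} (fun _ => (1:ℝ)) ω) P :=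
    (integrable_const (1:ℝ)).indicator (measurableSet_le hU₂ hvk₂)
  have hmono₁ : ∫ ω, Set.indicator {ω' | U₁ ω' ≤ α ω' + c₁} (fun _ => (1:ℝ)) ω ∂P
      ≤ ∫ ω, Set.indicator {ω' | U₁ ω' ≤ v₁ (k₁ ω')} (fun _ => (1:ℝ)) ω ∂P := by
    refine integral_mono hintE₁ hintS₁ fun ω => ?_
    refine Set.indicator_le_indicator_of_subset ?_ (fun _ => zero_le_one) ω
    intro ω' hω'
    exact le_of_lt (lt_of_le_of_lt hω' (hub₁ ω'))
  have hmono₂ : ∫ ω, Set.indicator {ω' | U₂ ω' ≤ v₂ (k₂ ω')} (fun _ => (1:ℝ)) ω ∂P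
      ≤ ∫ ω, Set.indicator {ω' | U₂ ω' ≤ α ω' + c₂} (fun _ => (1:ℝ)) ω ∂P := by
    refine integral_mono hintS₂ hintE₂ fun ω => ?_
    refine Set.indicator_le_indicator_of_subset ?_ (fun _ => zero_le_one) ω
    intro ω' hω'
    exact le_trans hω' (hlb₂ ω')
  -- strict middle inequality
  have hpos : ∀ᵐ ω ∂P, 0 < G (v₂ (k₂ ω)) ω - G (v₁ (k₁ ω)) ω := by
    have h1 := ae_all_iff.mpr fun j : ℤ => hcond₁ (v₁ j)
    have h2 := ae_all_iff.mpr fun j : ℤ => hcond₁ (v₂ j)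
    filter_upwards [h1, h2, hFmono] with ω h1 h2 hmono
    have e1 : G (v₁ (k₁ ω)) ω = F (v₁ (k₁ ω)) (α ω) := h1 (k₁ ω)
    have e2 : G (v₂ (k₂ ω)) ω = F (v₂ (k₂ ω)) (α ω) := h2 (k₂ ω)
    rw [e1, e2, sub_pos]
    exact hmono (hlt ω)
  have hmid : ∫ ω, G (v₁ (k₁ ω)) ω ∂P < ∫ ω, G (v₂ (k₂ ω)) ω ∂P := by
    have hdiff : 0 < ∫ ω, (G (v₂ (k₂ ω)) ω - G (v₁ (k₁ ω)) ω) ∂P := by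
      rw [integral_pos_iff_support_of_nonneg_ae (hpos.mono fun ω h => le_of_lt h)
        (hintH₂.sub hintH₁)]
      have h0 : P (Function.support fun ω => G (v₂ (k₂ ω)) ω - G (v₁ (k₁ ω)) ω)ᶜ = 0 := by
        refine measure_mono_null ?_ (ae_iff.mp hpos)
        intro ω hω
        simp only [Set.mem_compl_iff, Function.mem_support, not_not] at hω
        simp only [Set.mem_setOf_eq, not_lt]
        exact le_of_eq hω
      by_contra hle
      push_neg at hle
      have hle0 : P (Function.support fun ω => G (v₂ (k₂ ω)) ω - G (v₁ (k₁ ω)) ω) = 0 :=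
        le_antisymm hle zero_le
      have := measure_union_le (μ := P)
        (Function.support fun ω => G (v₂ (k₂ ω)) ω - G (v₁ (k₁ ω)) ω)
        (Function.support fun ω => G (v₂ (k₂ ω)) ω - G (v₁ (k₁ ω)) ω)ᶜ
      rw [Set.union_compl_self, hle0, h0, measure_univ] at this
      simp at this
    have := integral_sub hintH₂ hintH₁
    rw [this] at hdiff
    linarith
  -- the two probabilities compare strictly
  have htoReal : ∀ (S : Set Ω), MeasurableSet S →
      (P S).toReal = ∫ ω, Set.indicator S (fun _ => (1:ℝ)) ω ∂P := by
    intro S hS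
    rw [integral_indicator_const (1:ℝ) hS, smul_eq_mul, mul_one, measureReal_def]
  have hchain : (P {ω | U₁ ω ≤ α ω + c₁}).toReal < (P {ω | U₂ ω ≤ α ω + c₂}).toReal := by
    rw [htoReal _ hE₁m, htoReal _ hE₂m]
    calc ∫ ω, Set.indicator {ω' | U₁ ω' ≤ α ω' + c₁} (fun _ => (1:ℝ)) ω ∂P
        ≤ ∫ ω, Set.indicator {ω' | U₁ ω' ≤ v₁ (k₁ ω')} (fun _ => (1:ℝ)) ω ∂P := hmono₁
      _ = ∫ ω, G (v₁ (k₁ ω)) ω ∂P := hfr₁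
      _ < ∫ ω, G (v₂ (k₂ ω)) ω ∂P := hmid
      _ = ∫ ω, Set.indicator {ω' | U₂ ω' ≤ v₂ (k₂ ω')} (fun _ => (1:ℝ)) ω ∂P := hfr₂.symm
      _ ≤ ∫ ω, Set.indicator {ω' | U₂ ω' ≤ α ω' + c₂} (fun _ => (1:ℝ)) ω ∂P := hmono₂
  -- set identities for the switching events
  have hSeq : {ω | D₁ ω + D₂ ω = 1}
      = ({ω | U₁ ω ≤ α ω + c₁}ᶜ ∩ {ω | U₂ ω ≤ α ω + c₂})
        ∪ ({ω | U₁ ω ≤ α ω + c₁} ∩ {ω | U₂ ω ≤ α ω + c₂}ᶜ) := by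
    subst hD₁ hD₂
    ext ω
    by_cases h1 : U₁ ω ≤ α ω + c₁ <;> by_cases h2 : U₂ ω ≤ α ω + c₂ <;>
      simp [h1, h2]
  have hTeq : {ω | D₂ ω - D₁ ω = 1}
      = {ω | U₁ ω ≤ α ω + c₁}ᶜ ∩ {ω | U₂ ω ≤ α ω + c₂} := by
    subst hD₁ hD₂
    ext ω
    by_cases h1 : U₁ ω ≤ α ω + c₁ <;> by_cases h2 : U₂ ω ≤ α ω + c₂ <;>
      simp [h1, h2]
  set A : Set Ω := {ω | U₁ ω ≤ α ω + c₁}ᶜ ∩ {ω | U₂ ω ≤ α ω + c₂} with hA_def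
  set Bs : Set Ω := {ω | U₁ ω ≤ α ω + c₁} ∩ {ω | U₂ ω ≤ α ω + c₂}ᶜ with hBs_def
  have hAm : MeasurableSet A := hE₁m.compl.inter hE₂m
  have hBm : MeasurableSet Bs := hE₁m.inter hE₂m.compl
  have hdisjAB : Disjoint A Bs := by
    rw [Set.disjoint_left]
    rintro ω ⟨h1, _⟩ ⟨h3, _⟩
    exact h1 h3
  have hPS : P (A ∪ Bs) = P A + P Bs := measure_union hdisjAB hBm
  have key1 : P {ω | U₁ ω ≤ α ω + c₁} + P A = P {ω | U₂ ω ≤ α ω + c₂} + P Bs := by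
    have d1 : Disjoint {ω | U₁ ω ≤ α ω + c₁} A := by
      rw [Set.disjoint_left]; rintro ω h1 ⟨h2, _⟩; exact h2 h1
    have d2 : Disjoint {ω | U₂ ω ≤ α ω + c₂} Bs := by
      rw [Set.disjoint_left]; rintro ω h1 ⟨_, h2⟩; exact h2 h1
    have e1 : {ω | U₁ ω ≤ α ω + c₁} ∪ A = {ω | U₁ ω ≤ α ω + c₁} ∪ {ω | U₂ ω ≤ α ω + c₂} := by
      rw [hA_def, Set.union_inter_distrib_left, Set.union_compl_self, Set.univ_inter]
    have e2 : {ω | U₂ ω ≤ α ω + c₂} ∪ Bs = {ω | U₁ ω ≤ α ω + c₁} ∪ {ω | U₂ ω ≤ α ω + c₂} := by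
      rw [hBs_def, Set.union_inter_distrib_left, Set.union_compl_self, Set.inter_univ,
        Set.union_comm]
    rw [← measure_union d1 hAm, ← measure_union d2 hBm, e1, e2]
  have fin : ∀ s : Set Ω, P s ≠ ⊤ := fun s => measure_ne_top P s
  have key1' : (P {ω | U₁ ω ≤ α ω + c₁}).toReal + (P A).toReal
      = (P {ω | U₂ ω ≤ α ω + c₂}).toReal + (P Bs).toReal := by
    rw [← ENNReal.toReal_add (fin _) (fin _), ← ENNReal.toReal_add (fin _) (fin _), key1]
  have hba : (P Bs).toReal < (P A).toReal := by linarith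
  have hApos : 0 < P A := by
    by_contra h
    push_neg at h
    have h0 : P A = 0 := le_antisymm h zero_le
    rw [h0] at hba
    simp only [ENNReal.toReal_zero] at hba
    exact absurd hba (not_lt.mpr ENNReal.toReal_nonneg)
  have hSpos : 0 < P (A ∪ Bs) := lt_of_lt_of_le hApos (measure_mono Set.subset_union_left)
  constructor
  · rw [hSeq]; exact hSpos
  · rw [hSeq, hTeq, ProbabilityTheory.cond_apply (hAm.union hBm) P,
      Set.inter_eq_right.mpr Set.subset_union_left]
    have hfinx : (P (A ∪ Bs))⁻¹ * P A ≠ ⊤ :=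
      ENNReal.mul_ne_top (ENNReal.inv_ne_top.mpr (ne_of_gt hSpos)) (fin _)
    rw [← ENNReal.toReal_lt_toReal (by norm_num : (1/2 : ℝ≥0∞) ≠ ⊤) hfinx,
      ENNReal.toReal_mul, ENNReal.toReal_inv, hPS, ENNReal.toReal_add (fin _) (fin _)]
    have h12 : ((1 : ℝ≥0∞)/2).toReal = (1:ℝ)/2 := by
      rw [ENNReal.toReal_div]; norm_num
    rw [h12]
    have hAt : 0 < (P A).toReal := ENNReal.toReal_pos (ne_of_gt hApos) (fin _)
    have hBt : 0 ≤ (P Bs).toReal := ENNReal.toReal_nonneg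
    rw [inv_mul_eq_div, lt_div_iff₀ (by linarith : (0:ℝ) < (P A).toReal + (P Bs).toReal)]
    linarith
end

section
/- Let W = (ΔX, −1) be a random vector in ℝ^{K+1}, where ΔX is an ℝ^K-valued random vector. Assume: (i) conditional on its other K−1 components, the K-th component of ΔX has (almost surely) a conditional distribution that is absolutely continuous with respect to Lebesgue measure on ℝ with almost-everywhere positive density; (ii) the support of W is not contained in any proper linear subspace of ℝ^{K+1}. Let θ₀ = (β₀, γ₀) and θ = (β, γ) be elements of Θ = {(β, γ) ∈ ℝ^K × ℝ : ‖β‖ = 1}, with the K-th component of β₀ nonzero, and suppose θ ≠ θ₀. Then P(W·θ < 0 ≤ W·θ₀) + P(W·θ₀ < 0 ≤ W·θ) > 0. -/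
open MeasureTheory ProbabilityTheory RealInnerProductSpace

private lemma interval_not {Q : ℝ → Prop} (h : ∀ᵐ t : ℝ, Q t) {x y : ℝ} (hxy : x < y)
    (hI : ∀ t, x < t → t < y → ¬ Q t) : False := by
  rw [ae_iff] at h
  have hsub : Set.Ioo x y ⊆ {t | ¬ Q t} := fun t ht => hI t ht.1 ht.2
  have h2 := (measure_mono hsub).trans h.le
  rw [Real.volume_Ioo, nonpos_iff_eq_zero, ENNReal.ofReal_eq_zero] at h2
  linarith

private lemma ltpos {a b t : ℝ} (ha : 0 < a) : b + t * a < 0 ↔ t < -b / a := by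
  rw [lt_div_iff₀ ha]; constructor <;> intro <;> linarith

private lemma ltneg {a b t : ℝ} (ha : a < 0) : b + t * a < 0 ↔ -b / a < t := by
  rw [div_lt_iff_of_neg ha]; constructor <;> intro <;> linarith

private lemma halfline {a b a' b' : ℝ} (ha' : a' ≠ 0)
    (h : ∀ᵐ t : ℝ, (b + t * a < 0 ↔ b' + t * a' < 0)) :
    0 < a * a' ∧ a' * b = a * b' := by
  have hane : a ≠ 0 := by
    intro ha0
    subst ha0
    rcases lt_or_ge b 0 with hb | hb
    · rcases ha'.lt_or_gt with ha'n | ha'p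
      · exact interval_not h (sub_lt_self (-b'/a') one_pos) fun t ht1 ht2 hQ => by
          have := hQ.mp (by simpa using hb); rw [ltneg ha'n] at this; linarith
      · exact interval_not h (lt_add_one (-b'/a')) fun t ht1 ht2 hQ => by
          have := hQ.mp (by simpa using hb); rw [ltpos ha'p] at this; linarith
    · rcases ha'.lt_or_gt with ha'n | ha'p
      · exact interval_not h (lt_add_one (-b'/a')) fun t ht1 ht2 hQ => by
          have := hQ.mpr ((ltneg ha'n).mpr (by linarith)); simp at this; linarith
      · exact interval_not h (sub_lt_self (-b'/a') one_pos) fun t ht1 ht2 hQ => by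
          have := hQ.mpr ((ltpos ha'p).mpr (by linarith)); simp at this; linarith
  set r := -b / a with hr
  set r' := -b' / a' with hr'
  have hsign : 0 < a * a' := by
    rcases hane.lt_or_gt with han | hap <;> rcases ha'.lt_or_gt with ha'n | ha'p
    · exact mul_pos_of_neg_of_neg han ha'n
    · exfalso
      refine interval_not h (lt_add_one (max r r')) fun t ht1 ht2 hQ => ?_
      have h1 : b + t * a < 0 := (ltneg han).mpr (by
        have := le_max_left r r'; linarith)
      have h2 := hQ.mp h1
      rw [ltpos ha'p] at h2
      have := le_max_right r r'; linarith
    · exfalso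
      refine interval_not h (lt_add_one (max r r')) fun t ht1 ht2 hQ => ?_
      have h2 : b' + t * a' < 0 := (ltneg ha'n).mpr (by
        have := le_max_right r r'; linarith)
      have h1 := hQ.mpr h2
      rw [ltpos hap] at h1
      have := le_max_left r r'; linarith
    · exact mul_pos hap ha'p
  refine ⟨hsign, ?_⟩
  have hrr : r = r' := by
    by_contra hne
    rcases lt_or_gt_of_ne hne with hlt | hlt
    · rcases hane.lt_or_gt with han | hap
      · have ha'n : a' < 0 := by nlinarith
        refine interval_not h hlt fun t ht1 ht2 hQ => ?_
        have h2 := hQ.mp ((ltneg han).mpr ht1)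
        rw [ltneg ha'n] at h2; linarith
      · have ha'p : 0 < a' := by nlinarith
        refine interval_not h hlt fun t ht1 ht2 hQ => ?_
        have h1 := hQ.mpr ((ltpos ha'p).mpr ht2)
        rw [ltpos hap] at h1; linarith
    · rcases hane.lt_or_gt with han | hap
      · have ha'n : a' < 0 := by nlinarith
        refine interval_not h hlt fun t ht1 ht2 hQ => ?_
        have h1 := hQ.mpr ((ltneg ha'n).mpr ht1)
        rw [ltneg han] at h1; linarith
      · have ha'p : 0 < a' := by nlinarith
        refine interval_not h hlt fun t ht1 ht2 hQ => ?_
        have h2 := hQ.mp ((ltpos hap).mpr ht2)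
        rw [ltpos ha'p] at h2; linarith
  rw [hr, hr'] at hrr
  field_simp at hrr
  linarith

private lemma ae_vol_of_ae_meas {κ : Measure ℝ} [IsFiniteMeasure κ] (hac : κ ≪ volume)
    (hpos : ∀ᵐ u ∂(volume : Measure ℝ), 0 < κ.rnDeriv volume u)
    {Q : ℝ → Prop} (h : ∀ᵐ t ∂κ, Q t) : ∀ᵐ t ∂(volume : Measure ℝ), Q t := by
  rw [ae_iff] at h ⊢
  set N := toMeasurable κ {t | ¬ Q t} with hN
  have hNm : MeasurableSet N := measurableSet_toMeasurable _ _
  have hκN : κ N = 0 := by rw [measure_toMeasurable]; exact h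
  rw [← Measure.withDensity_rnDeriv_eq κ volume hac, withDensity_apply _ hNm] at hκN
  have hzero : (fun u => κ.rnDeriv volume u) =ᵐ[volume.restrict N] 0 :=
    (lintegral_eq_zero_iff (Measure.measurable_rnDeriv κ volume)).mp hκN
  have hposr : ∀ᵐ u ∂volume.restrict N, 0 < κ.rnDeriv volume u := ae_restrict_of_ae hpos
  have hfalse : ∀ᵐ u ∂volume.restrict N, False := by
    filter_upwards [hzero, hposr] with u h1 h2
    rw [h1] at h2; exact lt_irrefl 0 h2
  have hNval : volume N = 0 := by
    have := ae_iff.mp hfalse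
    simpa [Measure.restrict_apply_univ] using this
  exact measure_mono_null (subset_toMeasurable κ _) hNval

private lemma inner_snoc {n : ℕ} (x y : EuclideanSpace ℝ (Fin n)) (c d : ℝ) :
    ⟪(WithLp.toLp 2 (Fin.snoc x.ofLp c : Fin (n + 1) → ℝ) : EuclideanSpace ℝ (Fin (n + 1))),
      (WithLp.toLp 2 (Fin.snoc y.ofLp d : Fin (n + 1) → ℝ) : EuclideanSpace ℝ (Fin (n + 1)))⟫ =
      ⟪x, y⟫ + c * d := by
  simp [PiLp.inner_apply, RCLike.inner_apply, Fin.sum_univ_castSucc, mul_comm]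


/-- Inequality (IDineq) in the proof of Theorem 3.1 (point identification à la
Manski).  `W = (ΔX, −1)` is a random vector in `ℝ^{K+1}` (here `K = k + 1`);
(i) the `K`-th component of `ΔX` has, conditionally on the other `K − 1`
components, a distribution absolutely continuous w.r.t. Lebesgue measure with
a.e. positive density; (ii) the support of `W` is in no proper linear subspace.
If `θ = (β, γ)` and `θ₀ = (β₀, γ₀)` are unit-normalized, distinct, and the
`K`-th component of `β₀` is nonzero, then
`P(W·θ < 0 ≤ W·θ₀) + P(W·θ₀ < 0 ≤ W·θ) > 0`, where `W·θ = ΔX·β − γ`. -/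
theorem stmt_6 {Ω : Type*} [MeasurableSpace Ω] (P : Measure Ω) [IsProbabilityMeasure P]
    (k : ℕ) (ΔX : Ω → EuclideanSpace ℝ (Fin (k + 1))) (hΔX : Measurable ΔX)
    (W : Ω → EuclideanSpace ℝ (Fin (k + 2)))
    (hW : ∀ ω, W ω = WithLp.toLp 2 (Fin.snoc (ΔX ω).ofLp (-1) : Fin (k + 2) → ℝ))
    (hdensity : ∀ᵐ v ∂(P.map fun ω => (fun i : Fin k => ΔX ω i.castSucc)),
      (condDistrib (fun ω => ΔX ω (Fin.last k))
          (fun ω => (fun i : Fin k => ΔX ω i.castSucc)) P v) ≪ (volume : Measure ℝ) ∧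
        ∀ᵐ u ∂(volume : Measure ℝ),
          0 < ((condDistrib (fun ω => ΔX ω (Fin.last k))
            (fun ω => (fun i : Fin k => ΔX ω i.castSucc)) P v).rnDeriv volume u))
    (hsupp : ∀ S : Submodule ℝ (EuclideanSpace ℝ (Fin (k + 2))),
      (∀ᵐ ω ∂P, W ω ∈ S) → S = ⊤)
    (β₀ β : EuclideanSpace ℝ (Fin (k + 1))) (γ₀ γ : ℝ)
    (hβ₀ : ‖β₀‖ = 1) (hβ : ‖β‖ = 1) (hβ₀K : β₀ (Fin.last k) ≠ 0)
    (hne : (β, γ) ≠ (β₀, γ₀)) :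
    0 < P {ω | ⟪ΔX ω, β⟫ - γ < 0 ∧ 0 ≤ ⟪ΔX ω, β₀⟫ - γ₀} +
        P {ω | ⟪ΔX ω, β₀⟫ - γ₀ < 0 ∧ 0 ≤ ⟪ΔX ω, β⟫ - γ} := by
  classical
  by_contra hcon
  push_neg at hcon
  rw [nonpos_iff_eq_zero, add_eq_zero] at hcon
  obtain ⟨hA, hB⟩ := hcon
  set a : ℝ := β (Fin.last k) with ha_def
  set a' : ℝ := β₀ (Fin.last k) with ha'_def
  set Z : Ω → (Fin k → ℝ) := fun ω => (fun i : Fin k => ΔX ω i.castSucc) with hZ_def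
  set Y : Ω → ℝ := fun ω => ΔX ω (Fin.last k) with hY_def
  have hZ : Measurable Z := measurable_pi_lambda _ fun i => (measurable_pi_apply _).comp ((WithLp.measurable_ofLp _ _).comp hΔX)
  have hY : Measurable Y := (measurable_pi_apply _).comp ((WithLp.measurable_ofLp _ _).comp hΔX)
  -- inner product expansion
  have hinner : ∀ (ω : Ω) (c : EuclideanSpace ℝ (Fin (k + 1))),
      ⟪ΔX ω, c⟫ = (∑ i : Fin k, Z ω i * c i.castSucc) + Y ω * c (Fin.last k) := by
    intro ω c
    simp [PiLp.inner_apply, RCLike.inner_apply, Fin.sum_univ_castSucc, hZ_def, hY_def, mul_comm]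
  -- a.e. sign equivalence
  have hA' : ∀ᵐ ω ∂P, ¬(⟪ΔX ω, β⟫ - γ < 0 ∧ 0 ≤ ⟪ΔX ω, β₀⟫ - γ₀) := by
    rw [ae_iff]; simpa only [not_not] using hA
  have hB' : ∀ᵐ ω ∂P, ¬(⟪ΔX ω, β₀⟫ - γ₀ < 0 ∧ 0 ≤ ⟪ΔX ω, β⟫ - γ) := by
    rw [ae_iff]; simpa only [not_not] using hB
  have hae : ∀ᵐ ω ∂P,
      (((∑ i : Fin k, Z ω i * β i.castSucc) - γ) + Y ω * a < 0 ↔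
        ((∑ i : Fin k, Z ω i * β₀ i.castSucc) - γ₀) + Y ω * a' < 0) := by
    filter_upwards [hA', hB'] with ω h1 h2
    push_neg at h1 h2
    have e1 : ((∑ i : Fin k, Z ω i * β i.castSucc) - γ) + Y ω * a = ⟪ΔX ω, β⟫ - γ := by
      rw [hinner ω β]; ring
    have e2 : ((∑ i : Fin k, Z ω i * β₀ i.castSucc) - γ₀) + Y ω * a' = ⟪ΔX ω, β₀⟫ - γ₀ := by
      rw [hinner ω β₀]; ring
    rw [e1, e2]
    exact ⟨h1, h2⟩
  -- measurability of the relevant set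
  have hlinmeas : ∀ (c : EuclideanSpace ℝ (Fin (k + 1))) (e : ℝ),
      Measurable (fun p : (Fin k → ℝ) × ℝ =>
        ((∑ i : Fin k, p.1 i * c i.castSucc) - e) + p.2 * c (Fin.last k)) := by
    intro c e
    apply Measurable.add
    · apply Measurable.sub _ measurable_const
      exact Finset.measurable_sum _ fun i _ =>
        ((measurable_pi_apply i).comp measurable_fst).mul_const _
    · exact measurable_snd.mul_const _
  have hQmeas : MeasurableSet {p : (Fin k → ℝ) × ℝ |
      ((∑ i : Fin k, p.1 i * β i.castSucc) - γ) + p.2 * a < 0 ↔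
        ((∑ i : Fin k, p.1 i * β₀ i.castSucc) - γ₀) + p.2 * a' < 0} := by
    have h1 : MeasurableSet {p : (Fin k → ℝ) × ℝ |
        ((∑ i : Fin k, p.1 i * β i.castSucc) - γ) + p.2 * a < 0} :=
      measurableSet_lt (hlinmeas β γ) measurable_const
    have h2 : MeasurableSet {p : (Fin k → ℝ) × ℝ |
        ((∑ i : Fin k, p.1 i * β₀ i.castSucc) - γ₀) + p.2 * a' < 0} :=
      measurableSet_lt (hlinmeas β₀ γ₀) measurable_const
    have heqset : {p : (Fin k → ℝ) × ℝ |
        ((∑ i : Fin k, p.1 i * β i.castSucc) - γ) + p.2 * a < 0 ↔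
          ((∑ i : Fin k, p.1 i * β₀ i.castSucc) - γ₀) + p.2 * a' < 0} =
        ({p : (Fin k → ℝ) × ℝ | ((∑ i : Fin k, p.1 i * β i.castSucc) - γ) + p.2 * a < 0} ∩
          {p : (Fin k → ℝ) × ℝ | ((∑ i : Fin k, p.1 i * β₀ i.castSucc) - γ₀) + p.2 * a' < 0}) ∪
        ({p : (Fin k → ℝ) × ℝ | ((∑ i : Fin k, p.1 i * β i.castSucc) - γ) + p.2 * a < 0}ᶜ ∩
          {p : (Fin k → ℝ) × ℝ | ((∑ i : Fin k, p.1 i * β₀ i.castSucc) - γ₀) + p.2 * a' < 0}ᶜ) := by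
      ext p
      by_cases hF : ((∑ i : Fin k, p.1 i * β i.castSucc) - γ) + p.2 * a < 0 <;>
        by_cases hG : ((∑ i : Fin k, p.1 i * β₀ i.castSucc) - γ₀) + p.2 * a' < 0 <;>
        simp [hF, hG]
    rw [heqset]
    exact (h1.inter h2).union (h1.compl.inter h2.compl)
  -- disintegration
  set μZ := P.map Z with hμZ_def
  haveI : IsProbabilityMeasure μZ := Measure.isProbabilityMeasure_map hZ.aemeasurable
  set κ := condDistrib Y Z P with hκ_def
  have hpair : Measurable fun ω => (Z ω, Y ω) := hZ.prodMk hY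
  haveI : IsProbabilityMeasure (P.map fun ω => (Z ω, Y ω)) :=
    Measure.isProbabilityMeasure_map hpair.aemeasurable
  have hcomp : P.map (fun ω => (Z ω, Y ω)) = μZ ⊗ₘ κ := by
    rw [hκ_def, condDistrib_def, hμZ_def, ← Measure.fst_map_prodMk (X := Z) hY]
    exact ((P.map fun ω => (Z ω, Y ω)).disintegrate (P.map fun ω => (Z ω, Y ω)).condKernel).symm
  have hmap : ∀ᵐ p ∂(P.map fun ω => (Z ω, Y ω)),
      ((∑ i : Fin k, p.1 i * β i.castSucc) - γ) + p.2 * a < 0 ↔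
        ((∑ i : Fin k, p.1 i * β₀ i.castSucc) - γ₀) + p.2 * a' < 0 :=
    (ae_map_iff hpair.aemeasurable hQmeas).2 hae
  rw [hcomp] at hmap
  have hzt := Measure.ae_ae_of_ae_compProd hmap
  -- apply the half-line lemma conditionally
  have hkey : ∀ᵐ z ∂μZ, 0 < a * a' ∧
      a' * ((∑ i : Fin k, z i * β i.castSucc) - γ) =
        a * ((∑ i : Fin k, z i * β₀ i.castSucc) - γ₀) := by
    filter_upwards [hzt, hdensity] with z hz hd
    exact halfline hβ₀K (ae_vol_of_ae_meas hd.1 hd.2 hz)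
  haveI : (ae μZ).NeBot := ae_neBot.mpr (IsProbabilityMeasure.ne_zero μZ)
  obtain ⟨z0, hz0⟩ := hkey.exists
  have hsign : 0 < a * a' := hz0.1
  have heqmeas : MeasurableSet {z : Fin k → ℝ |
      a' * ((∑ i : Fin k, z i * β i.castSucc) - γ) =
        a * ((∑ i : Fin k, z i * β₀ i.castSucc) - γ₀)} := by
    apply measurableSet_eq_fun
    · exact (Finset.measurable_sum _ fun i _ =>
        (measurable_pi_apply i).mul_const _).sub measurable_const |>.const_mul _
    · exact (Finset.measurable_sum _ fun i _ =>
        (measurable_pi_apply i).mul_const _).sub measurable_const |>.const_mul _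
  have heqω : ∀ᵐ ω ∂P,
      a' * ((∑ i : Fin k, Z ω i * β i.castSucc) - γ) =
        a * ((∑ i : Fin k, Z ω i * β₀ i.castSucc) - γ₀) :=
    (ae_map_iff hZ.aemeasurable heqmeas).1 (hkey.mono fun z h => h.2)
  -- build the orthogonal vector
  set u : EuclideanSpace ℝ (Fin (k + 1)) := a' • β - a • β₀ with hu_def
  set v : EuclideanSpace ℝ (Fin (k + 2)) :=
    WithLp.toLp 2 (Fin.snoc u.ofLp (a' * γ - a * γ₀) : Fin (k + 2) → ℝ) with hv_def
  have hvW : ∀ᵐ ω ∂P, ⟪v, W ω⟫ = 0 := by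
    filter_upwards [heqω] with ω hω
    rw [hW ω, hv_def]
    rw [inner_snoc]
    have hsub : ⟪u, ΔX ω⟫ = a' * ⟪β, ΔX ω⟫ - a * ⟪β₀, ΔX ω⟫ := by
      rw [hu_def, inner_sub_left, real_inner_smul_left, real_inner_smul_left]
    rw [hsub, real_inner_comm (ΔX ω) β, real_inner_comm (ΔX ω) β₀, hinner ω β, hinner ω β₀]
    ring_nf
    ring_nf at hω
    linarith [hω]
  have hWS : ∀ᵐ ω ∂P, W ω ∈ (ℝ ∙ v)ᗮ :=
    hvW.mono fun ω h => Submodule.mem_orthogonal_singleton_iff_inner_right.mpr h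
  have hv0 : v = 0 := by
    have hT := hsupp _ hWS
    have hmem : v ∈ (ℝ ∙ v)ᗮ := by rw [hT]; trivial
    exact inner_self_eq_zero.mp (Submodule.mem_orthogonal_singleton_iff_inner_right.mp hmem)
  have hu0 : u = 0 := by
    ext j
    have := congrArg (fun w : EuclideanSpace ℝ (Fin (k + 2)) => w j.castSucc) hv0
    simpa [hv_def, Fin.snoc_castSucc] using this
  have hc0 : a' * γ - a * γ₀ = 0 := by
    have := congrArg (fun w : EuclideanSpace ℝ (Fin (k + 2)) => w (Fin.last (k + 1))) hv0
    simpa [hv_def, Fin.snoc_last] using this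
  have husmul : a' • β = a • β₀ := by
    rw [hu_def] at hu0
    exact sub_eq_zero.mp hu0
  have habs : |a'| = |a| := by
    have h1 : ‖a' • β‖ = ‖a • β₀‖ := by rw [husmul]
    rw [norm_smul, norm_smul, hβ, hβ₀, mul_one, mul_one] at h1
    simpa [Real.norm_eq_abs] using h1
  have haa : a = a' := by
    rcases abs_eq_abs.mp habs with h | h
    · exact h.symm
    · nlinarith
  have hββ : β = β₀ := by
    have : a' • β = a' • β₀ := by rw [husmul, haa]
    exact smul_right_injective _ hβ₀K this
  have hγγ : γ = γ₀ := by
    rw [← haa] at hc0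
    have hane : a ≠ 0 := by
      intro h0; rw [h0, zero_mul] at hsign; exact lt_irrefl 0 hsign
    have : a * γ = a * γ₀ := by linarith
    exact mul_left_cancel₀ hane this
  exact hne (by rw [hββ, hγγ])
end

section
/- Let α be a real-valued random variable, and let U₁, U₂ be real-valued random variables such that U₁, U₂, and α are mutually independent and each Uₜ has CDF Λ(u) = exp(u)/(1 + exp(u)). Fix a₁, a₂ ∈ ℝ and define Dₜ = 1{Uₜ ≤ α + aₜ} for t = 1, 2. Then P(D₁ + D₂ = 1) > 0 and P(D₂ = 1 ∣ D₁ + D₂ = 1) = Λ(a₂ − a₁) = exp(a₂)/(exp(a₁) + exp(a₂)). In particular, this conditional probability does not depend on the distribution of α. -/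
open MeasureTheory ProbabilityTheory Real Set

noncomputable def Lam (u : ℝ) : ℝ := exp u / (1 + exp u)

lemma lam_pos (u : ℝ) : 0 < Lam u := by unfold Lam; positivity

lemma lam_lt_one (u : ℝ) : Lam u < 1 := by
  unfold Lam; rw [div_lt_one (by positivity)]; linarith

lemma one_sub_lam (u : ℝ) : 1 - Lam u = 1 / (1 + exp u) := by
  unfold Lam; field_simp
  ring

lemma key_id (x a₁ a₂ : ℝ) :
    Lam (x + a₂) * (1 - Lam (x + a₁)) =
      (exp a₂ / (exp a₁ + exp a₂)) *
        (Lam (x + a₁) * (1 - Lam (x + a₂)) + Lam (x + a₂) * (1 - Lam (x + a₁))) := by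
  rw [one_sub_lam, one_sub_lam]
  unfold Lam
  rw [exp_add, exp_add]
  have h1 : (0:ℝ) < exp a₁ + exp a₂ := by positivity
  have h2 : (0:ℝ) < 1 + exp x * exp a₁ := by positivity
  have h3 : (0:ℝ) < 1 + exp x * exp a₂ := by positivity
  field_simp

lemma lam_sub (a₁ a₂ : ℝ) : Lam (a₂ - a₁) = exp a₂ / (exp a₁ + exp a₂) := by
  unfold Lam
  rw [exp_sub]
  have h1 := exp_pos a₁
  have h2 := exp_pos a₂
  field_simp

lemma lam_cont : Continuous Lam :=
  Continuous.div continuous_exp (by continuity) (fun u => by positivity)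

/-- Conditional-logit sufficiency (heart of Theorem 3.3): if `α, U₁, U₂` are
mutually independent, the `Uₜ` standard logistic, and `Dₜ = 1{Uₜ ≤ α + aₜ}`,
then the switching event `{D₁ + D₂ = 1}` has positive probability and
`P(D₂ = 1 ∣ D₁ + D₂ = 1) = Λ(a₂ − a₁) = exp(a₂)/(exp(a₁) + exp(a₂))`; in
particular it does not depend on the distribution of `α`. -/
theorem stmt_9 {Ω : Type*} [MeasurableSpace Ω] (P : Measure Ω) [IsProbabilityMeasure P]
    (α U₁ U₂ : Ω → ℝ) (hα : Measurable α) (hU₁ : Measurable U₁) (hU₂ : Measurable U₂)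
    (hindep : iIndepFun ![α, U₁, U₂] P)
    (hcdf₁ : ∀ u : ℝ, P {ω | U₁ ω ≤ u} = ENNReal.ofReal (exp u / (1 + exp u)))
    (hcdf₂ : ∀ u : ℝ, P {ω | U₂ ω ≤ u} = ENNReal.ofReal (exp u / (1 + exp u)))
    (a₁ a₂ : ℝ) (D₁ D₂ : Ω → ℤ)
    (hD₁ : D₁ = fun ω => if U₁ ω ≤ α ω + a₁ then 1 else 0)
    (hD₂ : D₂ = fun ω => if U₂ ω ≤ α ω + a₂ then 1 else 0) :
    0 < P {ω | D₁ ω + D₂ ω = 1} ∧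
      ProbabilityTheory.cond P {ω | D₁ ω + D₂ ω = 1} {ω | D₂ ω = 1} =
        ENNReal.ofReal (exp (a₂ - a₁) / (1 + exp (a₂ - a₁))) ∧
      ProbabilityTheory.cond P {ω | D₁ ω + D₂ ω = 1} {ω | D₂ ω = 1} =
        ENNReal.ofReal (exp a₂ / (exp a₁ + exp a₂)) := by
  have h01 : ∀ u, (0:ℝ) ≤ Lam u := fun u => (lam_pos u).le
  have h1m : ∀ u, (0:ℝ) ≤ 1 - Lam u := fun u => by linarith [lam_lt_one u]
  set c : ℝ := exp a₂ / (exp a₁ + exp a₂) with hc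
  have hc_pos : 0 < c := by positivity
  set ν₀ := P.map α with hν₀
  set ν₁ := P.map U₁ with hν₁
  set ν₂ := P.map U₂ with hν₂
  haveI : IsProbabilityMeasure ν₀ := Measure.isProbabilityMeasure_map hα.aemeasurable
  haveI : IsProbabilityMeasure ν₁ := Measure.isProbabilityMeasure_map hU₁.aemeasurable
  haveI : IsProbabilityMeasure ν₂ := Measure.isProbabilityMeasure_map hU₂.aemeasurable
  have hν₁Iic : ∀ t, ν₁ (Iic t) = ENNReal.ofReal (Lam t) := fun t => by
    rw [hν₁, Measure.map_apply hU₁ measurableSet_Iic]; exact hcdf₁ t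
  have hν₂Iic : ∀ t, ν₂ (Iic t) = ENNReal.ofReal (Lam t) := fun t => by
    rw [hν₂, Measure.map_apply hU₂ measurableSet_Iic]; exact hcdf₂ t
  have hIoi : ∀ (ν : Measure ℝ) (_ : IsProbabilityMeasure ν),
      (∀ t, ν (Iic t) = ENNReal.ofReal (Lam t)) →
      ∀ t, ν (Ioi t) = ENNReal.ofReal (1 - Lam t) := by
    intro ν hprob hIic t
    haveI := hprob
    have h := measure_compl (measurableSet_Iic (a := t)) (measure_ne_top ν (Iic t))
    rw [compl_Iic] at h
    rw [h, hIic, measure_univ, ← ENNReal.ofReal_one,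
      ← ENNReal.ofReal_sub _ (h01 t)]
  have hν₁Ioi := hIoi ν₁ inferInstance hν₁Iic
  have hν₂Ioi := hIoi ν₂ inferInstance hν₂Iic
  -- independence: joint law is product
  have hmeas3 : ∀ i, Measurable (![α, U₁, U₂] i) := by
    intro i
    fin_cases i <;>
      simp only [Matrix.cons_val_zero, Matrix.cons_val_one, Matrix.head_cons,
        Matrix.cons_val_two, Matrix.tail_cons]
    exacts [hα, hU₁, hU₂]
  have h12 : IndepFun U₁ U₂ P := by
    have := hindep.indepFun (i := 1) (j := 2) (by decide)
    simpa using this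
  have h0_12 : IndepFun α (fun ω => (U₁ ω, U₂ ω)) P := by
    have := (hindep.indepFun_prodMk hmeas3 1 2 0 (by decide) (by decide)).symm
    simpa using this
  have measJ : Measurable (fun ω => (α ω, (U₁ ω, U₂ ω))) := hα.prodMk (hU₁.prodMk hU₂)
  have hmapJ : P.map (fun ω => (α ω, (U₁ ω, U₂ ω))) = ν₀.prod (ν₁.prod ν₂) := by
    rw [(indepFun_iff_map_prod_eq_prod_map_map hα.aemeasurable
        (hU₁.prodMk hU₂).aemeasurable).mp h0_12,
      (indepFun_iff_map_prod_eq_prod_map_map hU₁.aemeasurable hU₂.aemeasurable).mp h12]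
  -- the two switching events
  set A : Set Ω := {ω | U₁ ω ≤ α ω + a₁ ∧ α ω + a₂ < U₂ ω} with hA
  set B : Set Ω := {ω | α ω + a₁ < U₁ ω ∧ U₂ ω ≤ α ω + a₂} with hB
  have hsA : MeasurableSet {p : ℝ × ℝ × ℝ | p.2.1 ≤ p.1 + a₁ ∧ p.1 + a₂ < p.2.2} :=
    (measurableSet_le (measurable_fst.comp measurable_snd)
      (measurable_fst.add_const a₁)).inter
      (measurableSet_lt (measurable_fst.add_const a₂) (measurable_snd.comp measurable_snd))
  have hsB : MeasurableSet {p : ℝ × ℝ × ℝ | p.1 + a₁ < p.2.1 ∧ p.2.2 ≤ p.1 + a₂} :=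
    (measurableSet_lt (measurable_fst.add_const a₁)
      (measurable_fst.comp measurable_snd)).inter
      (measurableSet_le (measurable_snd.comp measurable_snd) (measurable_fst.add_const a₂))
  have hAmeas : MeasurableSet A :=
    (measurableSet_le hU₁ (hα.add_const a₁)).inter (measurableSet_lt (hα.add_const a₂) hU₂)
  have hBmeas : MeasurableSet B :=
    (measurableSet_lt (hα.add_const a₁) hU₁).inter (measurableSet_le hU₂ (hα.add_const a₂))
  have keyA : P A = ∫⁻ x, ENNReal.ofReal (Lam (x + a₁) * (1 - Lam (x + a₂))) ∂ν₀ := by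
    have hpre : A = (fun ω => (α ω, (U₁ ω, U₂ ω))) ⁻¹'
        {p : ℝ × ℝ × ℝ | p.2.1 ≤ p.1 + a₁ ∧ p.1 + a₂ < p.2.2} := rfl
    rw [hpre, ← Measure.map_apply measJ hsA, hmapJ, Measure.prod_apply hsA]
    refine lintegral_congr fun x => ?_
    have hslice : Prod.mk x ⁻¹' {p : ℝ × ℝ × ℝ | p.2.1 ≤ p.1 + a₁ ∧ p.1 + a₂ < p.2.2}
        = Iic (x + a₁) ×ˢ Ioi (x + a₂) := rfl
    rw [hslice, Measure.prod_prod, hν₁Iic, hν₂Ioi,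
      ← ENNReal.ofReal_mul (h01 _)]
  have keyB : P B = ∫⁻ x, ENNReal.ofReal (Lam (x + a₂) * (1 - Lam (x + a₁))) ∂ν₀ := by
    have hpre : B = (fun ω => (α ω, (U₁ ω, U₂ ω))) ⁻¹'
        {p : ℝ × ℝ × ℝ | p.1 + a₁ < p.2.1 ∧ p.2.2 ≤ p.1 + a₂} := rfl
    rw [hpre, ← Measure.map_apply measJ hsB, hmapJ, Measure.prod_apply hsB]
    refine lintegral_congr fun x => ?_
    have hslice : Prod.mk x ⁻¹' {p : ℝ × ℝ × ℝ | p.1 + a₁ < p.2.1 ∧ p.2.2 ≤ p.1 + a₂}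
        = Ioi (x + a₁) ×ˢ Iic (x + a₂) := rfl
    rw [hslice, Measure.prod_prod, hν₁Ioi, hν₂Iic,
      ← ENNReal.ofReal_mul (h1m _), mul_comm (1 - Lam (x + a₁))]
  -- identify events
  have hSeq : {ω | D₁ ω + D₂ ω = 1} = A ∪ B := by
    subst hD₁ hD₂
    ext ω
    by_cases h1 : U₁ ω ≤ α ω + a₁ <;> by_cases h2 : U₂ ω ≤ α ω + a₂ <;>
      simp [hA, hB, h1, h2, not_le.mp, not_le]
  have hint : (A ∪ B) ∩ {ω | D₂ ω = 1} = B := by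
    subst hD₂
    ext ω
    by_cases h1 : U₁ ω ≤ α ω + a₁ <;> by_cases h2 : U₂ ω ≤ α ω + a₂ <;>
      simp [hA, hB, h1, h2, not_le]
  -- measurability of integrands
  have hLmeas : Measurable Lam := lam_cont.measurable
  have mfA : Measurable (fun x => ENNReal.ofReal (Lam (x + a₁) * (1 - Lam (x + a₂)))) :=
    ((hLmeas.comp (measurable_id.add_const a₁)).mul
      (measurable_const.sub (hLmeas.comp (measurable_id.add_const a₂)))).ennreal_ofReal
  have mfB : Measurable (fun x => ENNReal.ofReal (Lam (x + a₂) * (1 - Lam (x + a₁)))) :=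
    ((hLmeas.comp (measurable_id.add_const a₂)).mul
      (measurable_const.sub (hLmeas.comp (measurable_id.add_const a₁)))).ennreal_ofReal
  have hdisj : Disjoint A B := by
    rw [Set.disjoint_left]
    rintro ω ⟨w1, _⟩ ⟨v1, _⟩
    exact absurd w1 (not_le.mpr v1)
  have hPS : P (A ∪ B) = ∫⁻ x, (ENNReal.ofReal (Lam (x + a₁) * (1 - Lam (x + a₂)))
      + ENNReal.ofReal (Lam (x + a₂) * (1 - Lam (x + a₁)))) ∂ν₀ := by
    rw [measure_union hdisj hBmeas, keyA, keyB, lintegral_add_left mfA]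
  have hPB : P B = ENNReal.ofReal c * P (A ∪ B) := by
    rw [keyB, hPS, ← lintegral_const_mul' _ _ ENNReal.ofReal_ne_top]
    refine lintegral_congr fun x => ?_
    rw [← ENNReal.ofReal_add (mul_nonneg (h01 _) (h1m _)) (mul_nonneg (h01 _) (h1m _)),
      ← ENNReal.ofReal_mul hc_pos.le]
    exact congrArg _ (key_id x a₁ a₂)
  have hSpos : 0 < P (A ∪ B) := by
    rw [hPS, lintegral_pos_iff_support (show Measurable (fun x =>
      ENNReal.ofReal (Lam (x + a₁) * (1 - Lam (x + a₂)))
        + ENNReal.ofReal (Lam (x + a₂) * (1 - Lam (x + a₁)))) from mfA.add mfB)]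
    have hsupp : (Function.support fun x => ENNReal.ofReal (Lam (x + a₁) * (1 - Lam (x + a₂)))
        + ENNReal.ofReal (Lam (x + a₂) * (1 - Lam (x + a₁)))) = Set.univ := by
      ext x
      have hpos : 0 < ENNReal.ofReal (Lam (x + a₁) * (1 - Lam (x + a₂)))
          + ENNReal.ofReal (Lam (x + a₂) * (1 - Lam (x + a₁))) :=
        lt_of_lt_of_le (ENNReal.ofReal_pos.mpr (mul_pos (lam_pos _)
          (by linarith [lam_lt_one (x + a₂)]))) le_self_add
      simp [Function.mem_support, hpos.ne']
    rw [hsupp]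
    simp
  have hSne : P (A ∪ B) ≠ 0 := hSpos.ne'
  have hStop : P (A ∪ B) ≠ ⊤ := measure_ne_top _ _
  have hcond : ProbabilityTheory.cond P {ω | D₁ ω + D₂ ω = 1} {ω | D₂ ω = 1}
      = ENNReal.ofReal c := by
    rw [hSeq, ProbabilityTheory.cond_apply (hAmeas.union hBmeas), hint, hPB,
      mul_comm (ENNReal.ofReal c) (P (A ∪ B)), ← mul_assoc,
      ENNReal.inv_mul_cancel hSne hStop, one_mul]
  refine ⟨by rw [hSeq]; exact hSpos, ?_, ?_⟩
  · rw [hcond]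
    congr 1
    exact (lam_sub a₁ a₂).symm
  · exact hcond
end

section
/- Let (Ω, ℱ, P) be a probability space carrying integrable real-valued random variables α, U₁, U₂ and random vectors X₁, X₂ in ℝ^K; let 𝒢 = σ(X₁, X₂). Let β ∈ ℝ^K, let h₁, h₂ : ℝ → ℝ be strictly increasing bijections with inverses h₁⁻¹, h₂⁻¹, let c₁ ∈ ℝ, set gₜ(y) = hₜ⁻¹(y) − c₁, and define Yₜ = hₜ(α + Xₜ·β − Uₜ) for t = 1, 2. Assume there is a constant m ∈ ℝ such that E[Uₜ ∣ 𝒢] = m almost surely for t = 1, 2. Then, almost surely, E[α ∣ 𝒢] = E[gₜ(Yₜ) − Xₜ·β ∣ 𝒢] + c₁ + m for t = 1, 2. Consequently, the conditional mean of the fixed effect is identified up to the additive constant c₁ + m: for the conditional mean function μ(x) = E[α ∣ X = x], differences μ(x) − μ(x′) equal the corresponding differences of E[gₜ(Yₜ) − Xₜ·β ∣ X = x], which depend only on observables. -/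
open MeasureTheory RealInnerProductSpace


private lemma stmt_11_aux {Ω : Type*} {m0 : MeasurableSpace Ω} (P : Measure Ω)
    [IsProbabilityMeasure P] (𝒢 : MeasurableSpace Ω) (h𝒢le : 𝒢 ≤ m0)
    (α U f : Ω → ℝ) (hαint : Integrable α P) (hUint : Integrable U P)
    (c₁ m : ℝ) (hf : ∀ ω, f ω = α ω - U ω - c₁)
    (hm : P[U|𝒢] =ᵐ[P] fun _ => m) :
    P[α|𝒢] =ᵐ[P] fun ω => (P[f|𝒢]) ω + c₁ + m := by
  have hfeq : f = (fun ω => α ω - U ω) - (fun _ => c₁) := funext fun ω => by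
    simp [hf ω, Pi.sub_apply]
  have h1 : P[f|𝒢] =ᵐ[P] P[(fun ω => α ω - U ω)|𝒢] - P[(fun _ : Ω => c₁)|𝒢] := by
    rw [hfeq]; exact condExp_sub (hαint.sub hUint) (integrable_const c₁) 𝒢
  have h2 : P[(fun ω => α ω - U ω)|𝒢] =ᵐ[P] P[α|𝒢] - P[U|𝒢] := condExp_sub hαint hUint 𝒢
  have h3 : P[(fun _ : Ω => c₁)|𝒢] = fun _ => c₁ := condExp_const (μ := P) h𝒢le c₁
  filter_upwards [h1, h2, hm] with ω e1 e2 e4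
  simp only [Pi.sub_apply] at e1 e2
  rw [e1, e2, congrFun h3 ω, e4]; ring

/-- Theorem 4.1 of the paper: in the FELT model `Yₜ = hₜ(α + Xₜ·β − Uₜ)` with
strictly increasing bijective transformations and identified inverse
transformations `gₜ = hₜ⁻¹ − c₁`, if `E[Uₜ ∣ 𝒢] = m` a.s. for the σ-algebra
`𝒢 = σ(X₁, X₂)`, then a.s. `E[α ∣ 𝒢] = E[gₜ(Yₜ) − Xₜ·β ∣ 𝒢] + c₁ + m` for
`t = 1, 2`: the conditional mean of the fixed effect is identified up to the
additive constant `c₁ + m`. -/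
theorem stmt_11 {Ω : Type*} [MeasurableSpace Ω] (P : Measure Ω) [IsProbabilityMeasure P]
    (K : ℕ) (α U₁ U₂ : Ω → ℝ) (X₁ X₂ : Ω → EuclideanSpace ℝ (Fin K))
    (hαint : Integrable α P) (hU₁int : Integrable U₁ P) (hU₂int : Integrable U₂ P)
    (hX₁ : Measurable X₁) (hX₂ : Measurable X₂)
    (𝒢 : MeasurableSpace Ω)
    (h𝒢 : 𝒢 = MeasurableSpace.comap X₁ inferInstance ⊔ MeasurableSpace.comap X₂ inferInstance)
    (β : EuclideanSpace ℝ (Fin K))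
    (h₁ h₂ : ℝ → ℝ) (hmono₁ : StrictMono h₁) (hmono₂ : StrictMono h₂)
    (hbij₁ : Function.Bijective h₁) (hbij₂ : Function.Bijective h₂)
    (h₁inv h₂inv : ℝ → ℝ)
    (hinv₁ : Function.LeftInverse h₁inv h₁ ∧ Function.RightInverse h₁inv h₁)
    (hinv₂ : Function.LeftInverse h₂inv h₂ ∧ Function.RightInverse h₂inv h₂)
    (c₁ : ℝ) (g₁ g₂ : ℝ → ℝ)
    (hg₁ : ∀ y, g₁ y = h₁inv y - c₁) (hg₂ : ∀ y, g₂ y = h₂inv y - c₁)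
    (Y₁ Y₂ : Ω → ℝ)
    (hY₁ : ∀ ω, Y₁ ω = h₁ (α ω + ⟪X₁ ω, β⟫ - U₁ ω))
    (hY₂ : ∀ ω, Y₂ ω = h₂ (α ω + ⟪X₂ ω, β⟫ - U₂ ω))
    (m : ℝ)
    (hm₁ : P[U₁|𝒢] =ᵐ[P] fun _ => m) (hm₂ : P[U₂|𝒢] =ᵐ[P] fun _ => m) :
    (P[α|𝒢] =ᵐ[P] fun ω => (P[(fun ω' => g₁ (Y₁ ω') - ⟪X₁ ω', β⟫)|𝒢]) ω + c₁ + m) ∧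
      (P[α|𝒢] =ᵐ[P] fun ω => (P[(fun ω' => g₂ (Y₂ ω') - ⟪X₂ ω', β⟫)|𝒢]) ω + c₁ + m) := by
  have h𝒢le := sup_le hX₁.comap_le hX₂.comap_le
  rw [← h𝒢] at h𝒢le
  constructor
  · exact stmt_11_aux P 𝒢 h𝒢le α U₁ _ hαint hU₁int c₁ m
      (fun ω => by rw [hg₁, hY₁, hinv₁.1]; ring) hm₁
  · exact stmt_11_aux P 𝒢 h𝒢le α U₂ _ hαint hU₂int c₁ m
      (fun ω => by rw [hg₂, hY₂, hinv₂.1]; ring) hm₂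
end

section
/- Let (Ω, ℱ, P) be a probability space carrying square-integrable real-valued random variables α, U₁, U₂ and random vectors X₁, X₂ in ℝ^K; let 𝒢 = σ(X₁, X₂). Let β ∈ ℝ^K, let h₁, h₂ : ℝ → ℝ be strictly increasing bijections with inverses h₁⁻¹, h₂⁻¹, let c₁ ∈ ℝ, set gₜ(y) = hₜ⁻¹(y) − c₁, and define Yₜ = hₜ(α + Xₜ·β − Uₜ) for t = 1, 2. Define the conditional covariance Cov(A, B ∣ 𝒢) = E[AB ∣ 𝒢] − E[A ∣ 𝒢]E[B ∣ 𝒢]. Assume Cov(α, Uₜ ∣ 𝒢) = 0 almost surely for t = 1, 2, and Cov(U₁, U₂ ∣ 𝒢) = 0 almost surely. Then, almost surely, Cov(g₂(Y₂) − X₂·β, g₁(Y₁) − X₁·β ∣ 𝒢) = Var(α ∣ 𝒢), where Var(α ∣ 𝒢) = E[α² ∣ 𝒢] − (E[α ∣ 𝒢])². In particular, the conditional variance of the fixed effect is identified without any normalization of h₁. -/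
open MeasureTheory RealInnerProductSpace

/-- Conditional covariance given a sub-σ-algebra:
`Cov(A, B ∣ 𝒢) = E[AB ∣ 𝒢] − E[A ∣ 𝒢] E[B ∣ 𝒢]`. -/
noncomputable def condCov {Ω : Type*} {m0 : MeasurableSpace Ω} (P : MeasureTheory.Measure Ω)
    (𝒢 : MeasurableSpace Ω) (A B : Ω → ℝ) : Ω → ℝ :=
  fun ω => (P[(fun ω' => A ω' * B ω')|𝒢]) ω - (P[A|𝒢]) ω * (P[B|𝒢]) ω

/-- Product of two `L²` functions is integrable (via polarization). -/
lemma integrable_mul_of_memL2 {Ω : Type*} {m : MeasurableSpace Ω} {P : Measure Ω}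
    {f g : Ω → ℝ} (hf : MemLp f 2 P) (hg : MemLp g 2 P) :
    Integrable (fun ω => f ω * g ω) P := by
  have h1 : Integrable (fun ω => (f ω + g ω) ^ 2) P := by
    have := (hf.add hg).integrable_sq
    simpa using this
  have h2 := hf.integrable_sq
  have h3 := hg.integrable_sq
  have h4 : Integrable (fun ω => ((f ω + g ω) ^ 2 - f ω ^ 2 - g ω ^ 2) * (1/2)) P :=
    ((h1.sub h2).sub h3).mul_const _
  refine h4.congr (Filter.Eventually.of_forall fun ω => ?_)
  ring

/-- Theorem 4.2 of the paper: in the FELT model `Yₜ = hₜ(α + Xₜ·β − Uₜ)` with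
strictly increasing bijective transformations and `gₜ = hₜ⁻¹ − c₁`, if
`Cov(α, Uₜ ∣ 𝒢) = 0` and `Cov(U₁, U₂ ∣ 𝒢) = 0` a.s. for `𝒢 = σ(X₁, X₂)`, then
a.s. `Cov(g₂(Y₂) − X₂·β, g₁(Y₁) − X₁·β ∣ 𝒢) = Var(α ∣ 𝒢)`: the conditional
variance of the fixed effect is identified without normalizing `h₁`. -/
theorem stmt_12 {Ω : Type*} [MeasurableSpace Ω] (P : Measure Ω) [IsProbabilityMeasure P]
    (K : ℕ) (α U₁ U₂ : Ω → ℝ) (X₁ X₂ : Ω → EuclideanSpace ℝ (Fin K))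
    (hα2 : MemLp α 2 P) (hU₁2 : MemLp U₁ 2 P) (hU₂2 : MemLp U₂ 2 P)
    (hX₁ : Measurable X₁) (hX₂ : Measurable X₂)
    (𝒢 : MeasurableSpace Ω)
    (h𝒢 : 𝒢 = MeasurableSpace.comap X₁ inferInstance ⊔ MeasurableSpace.comap X₂ inferInstance)
    (β : EuclideanSpace ℝ (Fin K))
    (h₁ h₂ : ℝ → ℝ) (hmono₁ : StrictMono h₁) (hmono₂ : StrictMono h₂)
    (hbij₁ : Function.Bijective h₁) (hbij₂ : Function.Bijective h₂)
    (h₁inv h₂inv : ℝ → ℝ)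
    (hinv₁ : Function.LeftInverse h₁inv h₁ ∧ Function.RightInverse h₁inv h₁)
    (hinv₂ : Function.LeftInverse h₂inv h₂ ∧ Function.RightInverse h₂inv h₂)
    (c₁ : ℝ) (g₁ g₂ : ℝ → ℝ)
    (hg₁ : ∀ y, g₁ y = h₁inv y - c₁) (hg₂ : ∀ y, g₂ y = h₂inv y - c₁)
    (Y₁ Y₂ : Ω → ℝ)
    (hY₁ : ∀ ω, Y₁ ω = h₁ (α ω + ⟪X₁ ω, β⟫ - U₁ ω))
    (hY₂ : ∀ ω, Y₂ ω = h₂ (α ω + ⟪X₂ ω, β⟫ - U₂ ω))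
    (hcov₁ : condCov P 𝒢 α U₁ =ᵐ[P] fun _ => (0 : ℝ))
    (hcov₂ : condCov P 𝒢 α U₂ =ᵐ[P] fun _ => (0 : ℝ))
    (hcovU : condCov P 𝒢 U₁ U₂ =ᵐ[P] fun _ => (0 : ℝ)) :
    condCov P 𝒢 (fun ω => g₂ (Y₂ ω) - ⟪X₂ ω, β⟫) (fun ω => g₁ (Y₁ ω) - ⟪X₁ ω, β⟫)
      =ᵐ[P] condCov P 𝒢 α α := by
  -- the observed residuals are exactly `α − Uₜ − c₁`
  have hAeq : (fun ω => g₂ (Y₂ ω) - ⟪X₂ ω, β⟫) = fun ω => (α ω - U₂ ω) - c₁ := by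
    funext ω
    rw [hg₂, hY₂, hinv₂.1 _]
    ring
  have hBeq : (fun ω => g₁ (Y₁ ω) - ⟪X₁ ω, β⟫) = fun ω => (α ω - U₁ ω) - c₁ := by
    funext ω
    rw [hg₁, hY₁, hinv₁.1 _]
    ring
  rw [hAeq, hBeq]
  -- integrability
  have hαi : Integrable α P := hα2.integrable one_le_two
  have hU₁i : Integrable U₁ P := hU₁2.integrable one_le_two
  have hU₂i : Integrable U₂ P := hU₂2.integrable one_le_two
  have hA2 : MemLp (fun ω => α ω - U₂ ω) 2 P := hα2.sub hU₂2
  have hB2 : MemLp (fun ω => α ω - U₁ ω) 2 P := hα2.sub hU₁2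
  have hAi : Integrable (fun ω => α ω - U₂ ω) P := hA2.integrable one_le_two
  have hBi : Integrable (fun ω => α ω - U₁ ω) P := hB2.integrable one_le_two
  have hαα : Integrable (fun ω => α ω * α ω) P := integrable_mul_of_memL2 hα2 hα2
  have hαU₁ : Integrable (fun ω => α ω * U₁ ω) P := integrable_mul_of_memL2 hα2 hU₁2
  have hαU₂ : Integrable (fun ω => α ω * U₂ ω) P := integrable_mul_of_memL2 hα2 hU₂2
  have hU₁U₂ : Integrable (fun ω => U₁ ω * U₂ ω) P := integrable_mul_of_memL2 hU₁2 hU₂2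
  have hABi : Integrable (fun ω => (α ω - U₂ ω) * (α ω - U₁ ω)) P :=
    integrable_mul_of_memL2 hA2 hB2
  -- condexp of the shifted functions
  have hEA : P[(fun ω => (α ω - U₂ ω) - c₁)|𝒢]
      =ᵐ[P] fun ω => (P[(fun ω' => α ω' - U₂ ω')|𝒢]) ω - c₁ := by
    have h := condExp_sub (μ := P) (m := 𝒢) hAi (integrable_const c₁)
    refine h.trans ?_
    have hc := condExp_const (μ := P) (m := 𝒢) (by rw [h𝒢]; exact sup_le hX₁.comap_le hX₂.comap_le) c₁
    filter_upwards with ω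
    simp [hc]
  have hEB : P[(fun ω => (α ω - U₁ ω) - c₁)|𝒢]
      =ᵐ[P] fun ω => (P[(fun ω' => α ω' - U₁ ω')|𝒢]) ω - c₁ := by
    have h := condExp_sub (μ := P) (m := 𝒢) hBi (integrable_const c₁)
    refine h.trans ?_
    have hc := condExp_const (μ := P) (m := 𝒢) (by rw [h𝒢]; exact sup_le hX₁.comap_le hX₂.comap_le) c₁
    filter_upwards with ω
    simp [hc]
  -- condexp of the shifted product
  have hprodrw : (fun ω => ((α ω - U₂ ω) - c₁) * ((α ω - U₁ ω) - c₁))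
      = (fun ω => (α ω - U₂ ω) * (α ω - U₁ ω)
          - ((c₁ • fun ω' => α ω' - U₂ ω') ω + (c₁ • fun ω' => α ω' - U₁ ω') ω))
        + fun _ => c₁ * c₁ := by
    funext ω
    simp only [Pi.add_apply, Pi.smul_apply, smul_eq_mul]
    ring
  have hEprod : P[(fun ω => ((α ω - U₂ ω) - c₁) * ((α ω - U₁ ω) - c₁))|𝒢]
      =ᵐ[P] fun ω => (P[(fun ω' => (α ω' - U₂ ω') * (α ω' - U₁ ω'))|𝒢]) ω
        - (c₁ * (P[(fun ω' => α ω' - U₂ ω')|𝒢]) ω + c₁ * (P[(fun ω' => α ω' - U₁ ω')|𝒢]) ω)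
        + c₁ * c₁ := by
    rw [hprodrw]
    have hsum : Integrable
        ((c₁ • fun ω' => α ω' - U₂ ω') + (c₁ • fun ω' => α ω' - U₁ ω')) P :=
      (hAi.smul c₁).add (hBi.smul c₁)
    have h1 := condExp_add (μ := P) (m := 𝒢)
      (hABi.sub hsum) (integrable_const (c₁ * c₁))
    refine h1.trans ?_
    have h2 := condExp_sub (μ := P) (m := 𝒢) hABi hsum
    have h3 := condExp_add (μ := P) (m := 𝒢) (hAi.smul c₁) (hBi.smul c₁)
    have h4 := condExp_smul (μ := P) (m := 𝒢) c₁ (fun ω' => α ω' - U₂ ω')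
    have h5 := condExp_smul (μ := P) (m := 𝒢) c₁ (fun ω' => α ω' - U₁ ω')
    have hc := condExp_const (μ := P) (m := 𝒢) (by rw [h𝒢]; exact sup_le hX₁.comap_le hX₂.comap_le) (c₁ * c₁)
    filter_upwards [h2, h3, h4, h5] with ω h2 h3 h4 h5
    simp only [Pi.add_apply, Pi.sub_apply, Pi.smul_apply, smul_eq_mul] at *
    rw [hc]
    rw [h2, h3, h4, h5]
  -- expand `E[A|𝒢]`, `E[B|𝒢]`, and `E[AB|𝒢]` by linearity
  have hEA' : P[(fun ω' => α ω' - U₂ ω')|𝒢]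
      =ᵐ[P] fun ω => (P[α|𝒢]) ω - (P[U₂|𝒢]) ω := by
    have := condExp_sub (μ := P) (m := 𝒢) hαi hU₂i
    filter_upwards [this] with ω h
    exact h
  have hEB' : P[(fun ω' => α ω' - U₁ ω')|𝒢]
      =ᵐ[P] fun ω => (P[α|𝒢]) ω - (P[U₁|𝒢]) ω := by
    have := condExp_sub (μ := P) (m := 𝒢) hαi hU₁i
    filter_upwards [this] with ω h
    exact h
  have hABrw : (fun ω' => (α ω' - U₂ ω') * (α ω' - U₁ ω'))
      = (fun ω' => α ω' * α ω' - (α ω' * U₁ ω' + α ω' * U₂ ω'))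
        + fun ω' => U₁ ω' * U₂ ω' := by
    funext ω
    simp only [Pi.add_apply]
    ring
  have hEAB : P[(fun ω' => (α ω' - U₂ ω') * (α ω' - U₁ ω'))|𝒢]
      =ᵐ[P] fun ω => (P[(fun ω' => α ω' * α ω')|𝒢]) ω
        - ((P[(fun ω' => α ω' * U₁ ω')|𝒢]) ω + (P[(fun ω' => α ω' * U₂ ω')|𝒢]) ω)
        + (P[(fun ω' => U₁ ω' * U₂ ω')|𝒢]) ω := by
    rw [hABrw]
    have h1 := condExp_add (μ := P) (m := 𝒢) (hαα.sub (hαU₁.add hαU₂)) hU₁U₂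
    refine h1.trans ?_
    have h2 := condExp_sub (μ := P) (m := 𝒢) hαα (hαU₁.add hαU₂)
    have h3 := condExp_add (μ := P) (m := 𝒢) hαU₁ hαU₂
    filter_upwards [h2, h3] with ω h2 h3
    simp only [Pi.add_apply, Pi.sub_apply] at *
    rw [h2, h3]
  -- put everything together
  filter_upwards [hEA, hEB, hEprod, hEA', hEB', hEAB, hcov₁, hcov₂, hcovU]
    with ω hEA hEB hEprod hEA' hEB' hEAB hc₁ hc₂ hcU
  simp only [condCov] at hc₁ hc₂ hcU ⊢
  rw [hEprod, hEA, hEB, hEAB, hEA', hEB']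
  have e₁ : (P[(fun ω' => α ω' * U₁ ω')|𝒢]) ω = (P[α|𝒢]) ω * (P[U₁|𝒢]) ω := by
    linarith [hc₁]
  have e₂ : (P[(fun ω' => α ω' * U₂ ω')|𝒢]) ω = (P[α|𝒢]) ω * (P[U₂|𝒢]) ω := by
    linarith [hc₂]
  have e₃ : (P[(fun ω' => U₁ ω' * U₂ ω')|𝒢]) ω = (P[U₁|𝒢]) ω * (P[U₂|𝒢]) ω := by
    linarith [hcU]
  rw [e₁, e₂, e₃]
  ring
end

section
/- Let r ∈ ℝ with r ≠ 1, let J ≥ 2, and for j = 1, …, J let φⱼ > 0, Nⱼ > 0, ηⱼ > 0 be real numbers, and let x > 0 and B > 0. Suppose the first-order conditions hold: for all j, k ∈ {1, …, J}, φⱼ / φₖ = (Bʳ (ηₖ x / Nₖ)^{r−1}) / (Bʳ (ηⱼ x / Nⱼ)^{r−1}). Then for all j, k: ηₖ / ηⱼ = (Nₖ / Nⱼ) · (φⱼ / φₖ)^{1/(r−1)}. In particular, the ratios of resource shares do not depend on x or on B. -/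
/-- Equation (resource share invariance) of the paper: with PIGL indirect
utilities, the marginal utility of type `j` at shadow budget `ηⱼ x / Nⱼ` is
`Bʳ (ηⱼ x / Nⱼ)^{r−1}`, and if ratios of Pareto weights equal ratios of
marginal utilities (the first-order conditions), then
`ηₖ / ηⱼ = (Nₖ / Nⱼ) (φⱼ / φₖ)^{1/(r−1)}`; in particular the resource-share
ratios do not depend on `x` or `B`. -/
theorem stmt_13 (r : ℝ) (hr : r ≠ 1) (J : ℕ) (hJ : 2 ≤ J)
    (φ N η : Fin J → ℝ) (hφ : ∀ j, 0 < φ j) (hN : ∀ j, 0 < N j) (hη : ∀ j, 0 < η j)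
    (x B : ℝ) (hx : 0 < x) (hB : 0 < B)
    (hfoc : ∀ j k, φ j / φ k =
      (B ^ r * (η k * x / N k) ^ (r - 1)) / (B ^ r * (η j * x / N j) ^ (r - 1))) :
    ∀ j k, η k / η j = (N k / N j) * (φ j / φ k) ^ (1 / (r - 1)) := by
  intro j k
  have ha : (0:ℝ) < η k * x / N k := div_pos (mul_pos (hη k) hx) (hN k)
  have hb : (0:ℝ) < η j * x / N j := div_pos (mul_pos (hη j) hx) (hN j)
  have hBr : (0:ℝ) < B ^ r := Real.rpow_pos_of_pos hB r
  have h1 : φ j / φ k = ((η k * x / N k) / (η j * x / N j)) ^ (r - 1) := by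
    rw [hfoc j k, mul_div_mul_left _ _ (ne_of_gt hBr),
      ← Real.div_rpow ha.le hb.le]
  have hrr : r - 1 ≠ 0 := sub_ne_zero.mpr hr
  have h2 : (φ j / φ k) ^ (1 / (r - 1)) = (η k * x / N k) / (η j * x / N j) := by
    rw [h1, ← Real.rpow_mul (le_of_lt (div_pos ha hb)), mul_one_div,
      div_self hrr, Real.rpow_one]
  rw [h2]
  have hxne := hx.ne'
  have hNj := (hN j).ne'
  have hNk := (hN k).ne'
  have hηj := (hη j).ne'
  field_simp
end

section
/- Let r ∈ ℝ with r ≠ 1, let J ≥ 2, and for j = 1, …, J let φⱼ > 0 and Nⱼ > 0 be given. Then there is exactly one vector (η₁, …, η_J) of positive reals with Σⱼ ηⱼ = 1 such that for all j, k: φⱼ / φₖ = ((ηₖ/Nₖ) / (ηⱼ/Nⱼ))^{r−1}; it is given by ηⱼ = Nⱼ φⱼ^{−1/(r−1)} / Σₖ Nₖ φₖ^{−1/(r−1)}. In particular, this solution does not depend on any budget level x > 0 or scale B > 0 entering the first-order conditions multiplicatively, so under full commitment the resource shares are constant across time periods and states. -/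
/-- With PIGL utilities and full commitment, there is exactly one vector of
positive resource shares summing to one satisfying the first-order conditions
`φⱼ/φₖ = ((ηₖ/Nₖ)/(ηⱼ/Nⱼ))^{r−1}`, and it is given by
`ηⱼ = Nⱼ φⱼ^{−1/(r−1)} / Σₖ Nₖ φₖ^{−1/(r−1)}`.  In particular the solution
involves no budget level or scale, so resource shares are constant across
periods and states. -/
theorem stmt_14 (r : ℝ) (hr : r ≠ 1) (J : ℕ) (hJ : 2 ≤ J)
    (φ N : Fin J → ℝ) (hφ : ∀ j, 0 < φ j) (hN : ∀ j, 0 < N j) :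
    ∀ η : Fin J → ℝ,
      ((∀ j, 0 < η j) ∧ (∑ j, η j = 1) ∧
        (∀ j k, φ j / φ k = ((η k / N k) / (η j / N j)) ^ (r - 1))) ↔
      η = fun j => N j * φ j ^ (-1 / (r - 1)) / ∑ k, N k * φ k ^ (-1 / (r - 1)) := by
  have hr1 : r - 1 ≠ 0 := sub_ne_zero.2 hr
  set s : ℝ := (r - 1)⁻¹ with hs
  have hneg : -1 / (r - 1) = -s := by field_simp [hs]; rw [hs, mul_inv_cancel₀ hr1]
  set c : Fin J → ℝ := fun j => N j * φ j ^ (-1 / (r - 1)) with hc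
  have hcpos : ∀ j, 0 < c j := fun j =>
    mul_pos (hN j) (Real.rpow_pos_of_pos (hφ j) _)
  have hS : 0 < ∑ k, c k := Finset.sum_pos (fun k _ => hcpos k)
    ⟨⟨0, by omega⟩, Finset.mem_univ _⟩
  intro η
  constructor
  · rintro ⟨hpos, hsum, hfoc⟩
    have key : ∀ j k, (η j / N j) * φ j ^ s = (η k / N k) * φ k ^ s := by
      intro j k
      have ha : 0 < η j / N j := div_pos (hpos j) (hN j)
      have hb : 0 < η k / N k := div_pos (hpos k) (hN k)
      have h := hfoc j k
      have h2 : (φ j / φ k) ^ s = (η k / N k) / (η j / N j) := by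
        rw [h, hs, Real.rpow_rpow_inv (le_of_lt (div_pos hb ha)) hr1]
      rw [Real.div_rpow (le_of_lt (hφ j)) (le_of_lt (hφ k))] at h2
      have hφjs : 0 < φ j ^ s := Real.rpow_pos_of_pos (hφ j) s
      have hφks : 0 < φ k ^ s := Real.rpow_pos_of_pos (hφ k) s
      have h3 := div_eq_div_iff (ne_of_gt hφks) (ne_of_gt ha) |>.mp h2
      linear_combination h3
    have keta : ∀ j, η j = c j * ((η ⟨0, by omega⟩ / N ⟨0, by omega⟩) *
        φ ⟨0, by omega⟩ ^ s) := by
      intro j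
      have h := key j ⟨0, by omega⟩
      have hφjs : 0 < φ j ^ s := Real.rpow_pos_of_pos (hφ j) s
      have hNj := hN j
      have hstep : η j = (η j / N j * φ j ^ s) * (N j * (φ j ^ s)⁻¹) := by
        field_simp
      rw [hstep, h, hc]
      simp only [hneg, Real.rpow_neg (le_of_lt (hφ j))]
      ring
    set t : ℝ := (η ⟨0, by omega⟩ / N ⟨0, by omega⟩) * φ ⟨0, by omega⟩ ^ s with ht
    have hsum2 : (∑ k, c k) * t = 1 := by
      rw [← hsum, Finset.sum_mul]
      exact Finset.sum_congr rfl fun j _ => (keta j).symm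
    have htval : t = (∑ k, c k)⁻¹ := eq_inv_of_mul_eq_one_left (by linear_combination hsum2)
    funext j
    rw [keta j, htval, ← div_eq_mul_inv]
  · rintro rfl
    have hpos : ∀ j, 0 < c j / ∑ k, c k := fun j => div_pos (hcpos j) hS
    refine ⟨hpos, ?_, ?_⟩
    · rw [← Finset.sum_div, div_self (ne_of_gt hS)]
    · intro j k
      show φ j / φ k = ((c k / (∑ l, c l) / N k) / (c j / (∑ l, c l) / N j)) ^ (r - 1)
      have e : ∀ l, c l / (∑ m, c m) / N l = (φ l ^ s)⁻¹ / (∑ m, c m) := by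
        intro l
        have hφls : 0 < φ l ^ s := Real.rpow_pos_of_pos (hφ l) s
        have hNl := hN l
        have hcl : c l = N l * (φ l ^ s)⁻¹ := by
          rw [hc]
          simp only [hneg, Real.rpow_neg (le_of_lt (hφ l))]
        rw [hcl]
        field_simp
      have hratio : (c k / (∑ l, c l) / N k) / (c j / (∑ l, c l) / N j)
          = (φ j / φ k) ^ s := by
        rw [e j, e k, Real.div_rpow (le_of_lt (hφ j)) (le_of_lt (hφ k))]
        have hφjs' : 0 < φ j ^ s := Real.rpow_pos_of_pos (hφ j) s
        have hφks' : 0 < φ k ^ s := Real.rpow_pos_of_pos (hφ k) s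
        field_simp
      have hx : (0:ℝ) ≤ φ j / φ k := le_of_lt (div_pos (hφ j) (hφ k))
      rw [hratio, ← Real.rpow_mul hx, hs, inv_mul_cancel₀ hr1, Real.rpow_one]
end
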